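/- arXiv:2009.13260 — 2 statements merged into one kernel-verified Lean document; each statement's English description precedes it below -/
import Mathlib

section
/- Let A be a UTA and (G(q))_{q∈Q} a reduced G-map for A. Then the relation ⊑_G on configurations, defined by (q, v) ⊑_G (q', v') iff q = q' and v ⊑_{G(q)} v', is a simulation on the UTA semantics. -/
open Classical

/-- Comparison operator `◁ ∈ {<, ≤}`. -/
inductive Ineq where
  | lt
  | le

def Ineq.holds : Ineq → ℝ → ℝ → Prop
  | .lt, a, b => a < b
  | .le, a, b => a ≤ b

/-- Atomic constraints over a set `X` of clocks. -/
inductive AC (X : Type) where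
  | tt
  | ff
  | upper (x : X) (o : Ineq) (c : ℕ)              -- x ◁ c
  | lower (c : ℕ) (o : Ineq) (x : X)              -- c ◁ x
  | dUpper (x y : X) (o : Ineq) (c : ℕ)           -- x - y ◁ c
  | dLower (c : ℕ) (o : Ineq) (x y : X)           -- c ◁ x - y

/-- A valuation maps clocks to nonnegative reals. -/
abbrev Val (X : Type) := X → NNReal

def AC.sat {X : Type} (v : Val X) : AC X → Prop
  | .tt => True
  | .ff => False
  | .upper x o c => o.holds (v x : ℝ) (c : ℝ)
  | .lower c o x => o.holds (c : ℝ) (v x : ℝ)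
  | .dUpper x y o c => o.holds ((v x : ℝ) - (v y : ℝ)) (c : ℝ)
  | .dLower c o x y => o.holds (c : ℝ) ((v x : ℝ) - (v y : ℝ))

/-- A constraint (guard) is a finite conjunction of atomic constraints. -/
abbrev Guard (X : Type) := List (AC X)

def satG {X : Type} (v : Val X) (g : Guard X) : Prop := ∀ φ ∈ g, AC.sat v φ

/-- The valuation `v + δ`. -/
def delay {X : Type} (v : Val X) (δ : NNReal) : Val X := fun x => v x + δ

/-- `v ⊑_G v'` for a set `G` of atomic constraints. -/
def simS {X : Type} (G : Set (AC X)) (v v' : Val X) : Prop :=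
  ∀ δ : NNReal, ∀ φ ∈ G, AC.sat (delay v δ) φ → AC.sat (delay v' δ) φ

/-- `v ⊑_φ v'` for a single constraint `φ` (a conjunction of atomic constraints). -/
def simC {X : Type} (g : Guard X) (v v' : Val X) : Prop :=
  ∀ δ : NNReal, satG (delay v δ) g → satG (delay v' δ) g

/-- Right-hand side of an atomic update: `x := c` or `x := y + d`. -/
inductive Rhs (X : Type) where
  | const (c : ℕ)
  | clock (y : X) (d : ℤ)

/-- An update assigns a right-hand side to every clock. -/
abbrev Update (X : Type) := X → Rhs X

def Rhs.eval {X : Type} (v : Val X) : Rhs X → ℝ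
  | .const c => (c : ℝ)
  | .clock y d => (v y : ℝ) + (d : ℝ)

/-- `up(v) ≥ 0`. -/
def Update.nonneg {X : Type} (up : Update X) (v : Val X) : Prop :=
  ∀ x, 0 ≤ Rhs.eval v (up x)

/-- The valuation `up(v)` (meaningful when `up.nonneg v`). -/
noncomputable def Update.app {X : Type} (up : Update X) (v : Val X) : Val X :=
  fun x => Real.toNNReal (Rhs.eval v (up x))

/-- `up⁻¹(φ)` for an atomic constraint `φ`: simultaneous substitution of `up_x` for `x`
rewritten to an equivalent atomic constraint (possibly ⊤ or ⊥). -/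
noncomputable def upInvA {X : Type} (up : Update X) : AC X → AC X
  | .tt => .tt
  | .ff => .ff
  | .upper x o c =>
      match up x with
      | .const a => if o.holds (a : ℝ) (c : ℝ) then .tt else .ff
      | .clock y d => if (c : ℤ) - d < 0 then .ff else .upper y o ((c : ℤ) - d).toNat
  | .lower c o x =>
      match up x with
      | .const a => if o.holds (c : ℝ) (a : ℝ) then .tt else .ff
      | .clock y d => if (c : ℤ) - d < 0 then .tt else .lower ((c : ℤ) - d).toNat o y
  | .dUpper x y o c =>
      match up x, up y with
      | .const a, .const b => if o.holds ((a : ℝ) - (b : ℝ)) (c : ℝ) then .tt else .ff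
      | .const a, .clock z e =>
          if (a : ℤ) - e - (c : ℤ) < 0 then .tt
          else .lower ((a : ℤ) - e - (c : ℤ)).toNat o z
      | .clock z e, .const b =>
          if (c : ℤ) + (b : ℤ) - e < 0 then .ff
          else .upper z o ((c : ℤ) + (b : ℤ) - e).toNat
      | .clock z e, .clock w f =>
          if (c : ℤ) - e + f < 0 then .dLower (-((c : ℤ) - e + f)).toNat o w z
          else .dUpper z w o ((c : ℤ) - e + f).toNat
  | .dLower c o x y =>
      match up x, up y with
      | .const a, .const b => if o.holds (c : ℝ) ((a : ℝ) - (b : ℝ)) then .tt else .ff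
      | .const a, .clock z e =>
          if (a : ℤ) - e - (c : ℤ) < 0 then .ff
          else .upper z o ((a : ℤ) - e - (c : ℤ)).toNat
      | .clock z e, .const b =>
          if (c : ℤ) + (b : ℤ) - e < 0 then .tt
          else .lower ((c : ℤ) + (b : ℤ) - e).toNat o z
      | .clock z e, .clock w f =>
          if (c : ℤ) - e + f < 0 then .dUpper w z o (-((c : ℤ) - e + f)).toNat
          else .dLower ((c : ℤ) - e + f).toNat o z w

/-- `up⁻¹` of a conjunction of atomic constraints. -/
noncomputable def upInvC {X : Type} (up : Update X) (g : Guard X) : Guard X :=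
  g.map (upInvA up)

/-- The guard `g` contains an upper-bound constraint `x ◁₁ c` on clock `x`. -/
def hasUpperG {X : Type} (g : Guard X) (x : X) : Prop := ∃ o c, AC.upper x o c ∈ g

/-- The smallest constant of an upper-bound constraint on `x` in `g`. -/
noncomputable def minUpperG {X : Type} (g : Guard X) (x : X) : ℕ :=
  sInf {c | ∃ o, AC.upper x o c ∈ g}

/-- Condition of Case 3 of the table defining `wp`. -/
def case3G {X : Type} (g : Guard X) (x y : X) (d : ℕ) : Prop :=
  (∃ o c, AC.upper x o c ∈ g ∧ c < d) ∨
  (∃ o c, AC.dUpper x y o c ∈ g ∧ c < d) ∨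
  (∃ o e, AC.dLower e o x y ∈ g ∧ d < e)

/-- The pre `wp(φ, g, up)` of an atomic constraint under a guard-update pair. -/
noncomputable def wp {X : Type} (φ : AC X) (g : Guard X) (up : Update X) : AC X :=
  match upInvA up φ with
  | .upper x o d => if hasUpperG g x then .tt else .upper x o d
  | .lower d o x =>
      if hasUpperG g x ∧ minUpperG g x < d then .lower (minUpperG g x) .le x
      else .lower d o x
  | .dUpper x y o d => if case3G g x y d then .tt else .dUpper x y o d
  | .dLower d o x y => if case3G g x y d then .tt else .dLower d o x y
  | ψ => ψ

/-- A transition of an updatable timed automaton. -/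
structure UTrans (Q X : Type) where
  src : Q
  guard : Guard X
  update : Update X
  tgt : Q

/-- An updatable timed automaton (UTA). -/
structure UTA (Q X : Type) where
  init : Q
  trans : List (UTrans Q X)
  acc : Set Q

/-- (Non-reduced) G-map. -/
def IsGMap {Q X : Type} (A : UTA Q X) (G : Q → Set (AC X)) : Prop :=
  ∀ t ∈ A.trans,
    (∀ φ ∈ t.guard, φ ∈ G t.src) ∧
    (∀ x : X, upInvA t.update (AC.lower 0 .le x) ∈ G t.src) ∧
    (∀ φ ∈ G t.tgt, upInvA t.update φ ∈ G t.src)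

/-- Reduced G-map. -/
def IsRedGMap {Q X : Type} (A : UTA Q X) (G : Q → Set (AC X)) : Prop :=
  ∀ t ∈ A.trans,
    (∀ φ ∈ t.guard, φ ∈ G t.src) ∧
    (∀ x : X, wp (AC.lower 0 .le x) t.guard t.update ∈ G t.src) ∧
    (∀ φ ∈ G t.tgt, wp φ t.guard t.update ∈ G t.src)

/-- Pointwise intersection of all G-maps: the smallest G-map. -/
def minGMap {Q X : Type} (A : UTA Q X) : Q → Set (AC X) :=
  fun q => ⋂ G ∈ {G | IsGMap A G}, G q

/-- Pointwise intersection of all reduced G-maps: the smallest reduced G-map. -/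
def minRedGMap {Q X : Type} (A : UTA Q X) : Q → Set (AC X) :=
  fun q => ⋂ G ∈ {G | IsRedGMap A G}, G q

/-- Action transition `(q, v) →t (q', up(v))` of the UTA semantics. -/
def actionStep {Q X : Type} (A : UTA Q X) (t : UTrans Q X) (c c' : Q × Val X) : Prop :=
  t ∈ A.trans ∧ c.1 = t.src ∧ c'.1 = t.tgt ∧ satG c.2 t.guard ∧
  t.update.nonneg c.2 ∧ c'.2 = t.update.app c.2

/-- A simulation on the UTA semantics: a preorder relating only configurations with
the same state, preserved by delays and actions. -/
def IsSimulation {Q X : Type} (A : UTA Q X)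
    (R : (Q × Val X) → (Q × Val X) → Prop) : Prop :=
  (∀ p, R p p) ∧
  (∀ p₁ p₂ p₃, R p₁ p₂ → R p₂ p₃ → R p₁ p₃) ∧
  (∀ p p', R p p' → p.1 = p'.1) ∧
  (∀ q (v v' : Val X) (δ : NNReal), R (q, v) (q, v') → R (q, delay v δ) (q, delay v' δ)) ∧
  (∀ q (v v' : Val X) t p₁, R (q, v) (q, v') → actionStep A t (q, v) p₁ →
      ∃ v₁', actionStep A t (q, v') (p₁.1, v₁') ∧ R p₁ (p₁.1, v₁'))

/-- A run of a UTA: alternating delays and actions from the initial configuration. -/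
def IsRun {Q X : Type} (A : UTA Q X) (n : ℕ) (qs : ℕ → Q) (ds : ℕ → NNReal)
    (vs : ℕ → Val X) : Prop :=
  qs 0 = A.init ∧ (∀ x, vs 0 x = 0) ∧
  ∀ i, i < n → ∃ t, actionStep A t (qs i, delay (vs i) (ds i)) (qs (i + 1), vs (i + 1))

/-- Configurations occurring on some run of the UTA. -/
def ReachCfg {Q X : Type} (A : UTA Q X) (p : Q × Val X) : Prop :=
  ∃ n qs ds vs, IsRun A n qs ds vs ∧ ∃ δ : NNReal, p.1 = qs n ∧ p.2 = delay (vs n) δ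

/-- Timed automaton with subtraction: every atomic update is `x := 0` or `x := x - c`. -/
def IsSubtractionTA {Q X : Type} (A : UTA Q X) : Prop :=
  ∀ t ∈ A.trans, ∀ x : X,
    t.update x = Rhs.const 0 ∨ ∃ c : ℕ, t.update x = Rhs.clock x (-(c : ℤ))

/-- Timed automaton with bounded subtraction with bounds `M`. -/
def IsBoundedSub {Q X : Type} (A : UTA Q X) (M : X → ℕ) : Prop :=
  IsSubtractionTA A ∧
  ∀ q v, ReachCfg A (q, v) → ∀ t ∈ A.trans, t.src = q → satG v t.guard →
    ∀ (x : X) (c : ℕ), 0 < c → t.update x = Rhs.clock x (-(c : ℤ)) → (v x : ℝ) ≤ (M x : ℝ)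

/-- Timed automaton with syntactically bounded subtraction. -/
def IsSynBoundedSub {Q X : Type} (A : UTA Q X) : Prop :=
  IsSubtractionTA A ∧
  ∀ t ∈ A.trans, ∀ (x : X) (c : ℕ), 0 < c → t.update x = Rhs.clock x (-(c : ℤ)) →
    ∃ o c', AC.upper x o c' ∈ t.guard

/-- The constant of an atomic constraint. -/
def AC.cst {X : Type} : AC X → ℕ
  | .tt => 0
  | .ff => 0
  | .upper _ _ c => c
  | .lower c _ _ => c
  | .dUpper _ _ _ c => c
  | .dLower c _ _ _ => c

/-- The constant occurring in the right-hand side of an atomic update. -/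
def Rhs.cst {X : Type} : Rhs X → ℕ
  | .const c => c
  | .clock _ d => d.natAbs

/-- Maximum constant occurring in the guards of a UTA. -/
def maxGuardConst {Q X : Type} (A : UTA Q X) : ℕ :=
  (A.trans.map fun t => (t.guard.map AC.cst).foldr max 0).foldr max 0

/-- Maximum absolute value of a constant occurring in the updates of a UTA. -/
noncomputable def maxUpdateConst {Q X : Type} [Fintype X] (A : UTA Q X) : ℕ :=
  (A.trans.map fun t => Finset.univ.sup fun x => Rhs.cst (t.update x)).foldr max 0

/-- `L(G)(x)`: maximum constant of a lower-bound constraint on `x` in `G` (⊥ = −∞ if none). -/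
noncomputable def Lb {X : Type} (G : Set (AC X)) (x : X) : WithBot ℕ∞ :=
  ⨆ c ∈ {c : ℕ | ∃ o, AC.lower c o x ∈ G}, ((c : ℕ∞) : WithBot ℕ∞)

/-- `U(G)(x)`: maximum constant of an upper-bound constraint on `x` in `G` (⊥ = −∞ if none). -/
noncomputable def Ub {X : Type} (G : Set (AC X)) (x : X) : WithBot ℕ∞ :=
  ⨆ c ∈ {c : ℕ | ∃ o, AC.upper x o c ∈ G}, ((c : ℕ∞) : WithBot ℕ∞)

def AC.isDiag {X : Type} : AC X → Prop
  | .dUpper _ _ _ _ => True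
  | .dLower _ _ _ _ => True
  | _ => False

/-- `G^d`: the diagonal constraints of `G`. -/
def diagOf {X : Type} (G : Set (AC X)) : Set (AC X) := {φ ∈ G | φ.isDiag}

def AC.isWeak {X : Type} : AC X → Prop
  | .upper _ o _ => o = .le
  | .lower _ o _ => o = .le
  | .dUpper _ _ o _ => o = .le
  | .dLower _ o _ _ => o = .le
  | _ => True

/-- All atomic constraints in guards of `A` use the weak inequality `≤`. -/
def weakGuards {Q X : Type} (A : UTA Q X) : Prop :=
  ∀ t ∈ A.trans, ∀ φ ∈ t.guard, φ.isWeak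

/-- A context: an atomic constraint with a hole for the constant. -/
inductive Ctx (X : Type) where
  | upper (x : X)      -- x ≤ ·
  | lower (x : X)      -- · ≤ x
  | dUpper (x y : X)   -- x - y ≤ ·
  | dLower (x y : X)   -- · ≤ x - y

def Ctx.fill {X : Type} : Ctx X → ℕ → AC X
  | .upper x, c => .upper x .le c
  | .lower x, c => .lower c .le x
  | .dUpper x y, c => .dUpper x y .le c
  | .dLower x y, c => .dLower c .le x y

/-- Propagation sequence `(q_i, ctx_i[c_i]) → ⋯ → (q_j, ctx_j[c_j])`. -/
def PropSeq {Q X : Type} (A : UTA Q X) (i j : ℕ) (qs : ℕ → Q) (ctxs : ℕ → Ctx X)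
    (cs : ℕ → ℕ) : Prop :=
  ∀ k, i ≤ k → k < j → ∃ t ∈ A.trans, t.src = qs (k + 1) ∧ t.tgt = qs k ∧
    (ctxs (k + 1)).fill (cs (k + 1)) = wp ((ctxs k).fill (cs k)) t.guard t.update

/-! Along a transition `(g, up)` and a delay `δ`, the truth of an atomic `φ` at `up(v) + δ` is
either independent of `v` or is the truth of `up⁻¹(φ)` at `v + ε`. It therefore suffices that
`v ⊑_{G(q)} v'` preserve `up⁻¹(φ)` along delays whenever `v ⊨ g`. If
`wp(φ, g, up) = up⁻¹(φ)` this is the definition of `⊑`; otherwise the guard does the work: an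
upper bound `x ◁ c` of `g` satisfied by `v` forces `v' x ≤ v x` (Case 1), the lower bound
`c ≤ x` in `G(q)` together with `v x ≤ c` forces `v x ≤ v' x` (Case 2), and in Case 3 the guard
alone decides the diagonal constraint. Applied to `0 ≤ x`, the same argument gives
`up(v') ≥ 0`. -/

namespace Ineq

variable {o : Ineq} {a b a' b' : ℝ}

lemma holds.le (h : o.holds a b) : a ≤ b := by
  cases o
  exacts [le_of_lt h, h]

lemma holds_of_lt (h : a < b) : o.holds a b := by
  cases o
  exacts [h, le_of_lt h]

lemma not_holds_of_lt (h : b < a) : ¬ o.holds a b :=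
  fun hab => (not_le.mpr h) hab.le

lemma holds.mono (ha : a' ≤ a) (hb : b ≤ b') (h : o.holds a b) : o.holds a' b' := by
  cases o
  exacts [lt_of_le_of_lt ha (lt_of_lt_of_le h hb), ha.trans (h.trans hb)]

lemma holds_congr (h : a - b = a' - b') : o.holds a b ↔ o.holds a' b' := by
  cases o <;> simp only [Ineq.holds] <;> constructor <;> intro _ <;> linarith

end Ineq

lemma Int.cast_toNat_of_not_neg {k : ℤ} (hk : ¬ k < 0) : ((k.toNat : ℕ) : ℝ) = k := by
  rw [← Int.cast_natCast, Int.toNat_of_nonneg (not_lt.mp hk)]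

section Valuations

variable {X : Type}

@[simp]
lemma coe_delay (v : Val X) (δ : NNReal) (x : X) : (delay v δ x : ℝ) = v x + δ := by
  simp [delay]

lemma delay_zero (v : Val X) : delay v 0 = v := by
  funext x; simp [delay]

lemma delay_delay (v : Val X) (δ δ' : NNReal) : delay (delay v δ) δ' = delay v (δ + δ') := by
  funext x; simp [delay, add_assoc]

lemma Update.coe_app_of_const (up : Update X) (v : Val X) {x : X} {a : ℕ}
    (hx : up x = .const a) : (up.app v x : ℝ) = a := by
  simp [Update.app, hx, Rhs.eval]

lemma Update.coe_app_of_clock {up : Update X} {v : Val X} (hv : up.nonneg v) {x y : X} {d : ℤ}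
    (hx : up x = .clock y d) : (up.app v x : ℝ) = v y + d := by
  have hnn := hv x
  simp only [hx, Rhs.eval] at hnn
  simp [Update.app, hx, Rhs.eval, hnn]

lemma AC.sat_delay_dUpper (v : Val X) (δ : NNReal) (x y : X) (o : Ineq) (c : ℕ) :
    AC.sat (delay v δ) (.dUpper x y o c) ↔ AC.sat v (.dUpper x y o c) :=
  Ineq.holds_congr (by simp only [coe_delay]; ring)

lemma AC.sat_delay_dLower (v : Val X) (δ : NNReal) (c : ℕ) (o : Ineq) (x y : X) :
    AC.sat (delay v δ) (.dLower c o x y) ↔ AC.sat v (.dLower c o x y) :=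
  Ineq.holds_congr (by simp only [coe_delay]; ring)

end Valuations

namespace simS

variable {X : Type} {G : Set (AC X)} {v v' : Val X}

lemma refl (G : Set (AC X)) (v : Val X) : simS G v v := fun _ _ _ h => h

lemma trans {v'' : Val X} (h : simS G v v') (h' : simS G v' v'') : simS G v v'' :=
  fun δ φ hφ hsat => h' δ φ hφ (h δ φ hφ hsat)

lemma delay (h : simS G v v') (δ : NNReal) : simS G (delay v δ) (delay v' δ) := by
  intro δ' φ hφ hsat
  rw [delay_delay] at hsat ⊢
  exact h _ φ hφ hsat

lemma sat {φ : AC X} (h : simS G v v') (hφ : φ ∈ G) (hv : AC.sat v φ) : AC.sat v' φ := by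
  simpa only [delay_zero] using h 0 φ hφ (by rwa [delay_zero])

lemma satG {g : Guard X} (h : simS G v v') (hg : ∀ γ ∈ g, γ ∈ G) (hv : _root_.satG v g) :
    _root_.satG v' g :=
  fun γ hγ => h.sat (hg γ hγ) (hv γ hγ)

lemma le_of_upper_mem {y : X} {o : Ineq} {c : ℕ} (h : simS G v v') (hm : AC.upper y o c ∈ G)
    (hv : AC.sat v (.upper y o c)) : (v' y : ℝ) ≤ v y := by
  by_contra! hlt
  -- the delay moving the midpoint of `v y` and `v' y` to `c` separates them
  set δ := Real.toNNReal ((c : ℝ) - ((v y : ℝ) + v' y) / 2)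
  have hδ : (δ : ℝ) = max ((c : ℝ) - ((v y : ℝ) + v' y) / 2) 0 := Real.coe_toNNReal' _
  have hvδ : AC.sat (_root_.delay v δ) (.upper y o c) := by
    simp only [AC.sat, coe_delay, hδ]
    rcases max_cases ((c : ℝ) - ((v y : ℝ) + v' y) / 2) 0 with ⟨hmax, -⟩ | ⟨hmax, -⟩
    · exact Ineq.holds_of_lt (by rw [hmax]; linarith)
    · rw [hmax, add_zero]; exact hv
  have hv'δ := (h δ _ hm hvδ).le
  simp only [coe_delay, hδ] at hv'δ
  linarith [le_max_left ((c : ℝ) - ((v y : ℝ) + v' y) / 2) 0]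

lemma le_of_lower_mem {y : X} {m : ℕ} (h : simS G v v') (hm : AC.lower m .le y ∈ G)
    (hv : (v y : ℝ) ≤ m) : (v y : ℝ) ≤ v' y := by
  have hδ : ((Real.toNNReal (m - v y) : NNReal) : ℝ) = m - v y :=
    Real.coe_toNNReal _ (by linarith)
  have hvδ : AC.sat (_root_.delay v (Real.toNNReal (m - v y))) (.lower m .le y) := by
    simp only [AC.sat, Ineq.holds, coe_delay, hδ]
    linarith
  have hv'δ := h _ _ hm hvδ
  simp only [AC.sat, Ineq.holds, coe_delay, hδ] at hv'δ
  linarith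

end simS

section WeakestPrecondition

variable {X : Type} {g : Guard X} {v v' : Val X}

lemma minUpperG_mem {y : X} (h : hasUpperG g y) : ∃ o, AC.upper y o (minUpperG g y) ∈ g := by
  obtain ⟨o, c, hc⟩ := h
  exact Nat.sInf_mem (s := {c | ∃ o, AC.upper y o c ∈ g}) ⟨c, o, hc⟩

lemma sat_dUpper_of_case3G {y z : X} {o : Ineq} {d : ℕ} (h3 : case3G g y z d)
    (hv : satG v g) (hv' : satG v' g) (h : AC.sat v (.dUpper y z o d)) :
    AC.sat v' (.dUpper y z o d) := by
  rcases h3 with ⟨o₁, c, hg, hcd⟩ | ⟨o₁, c, hg, hcd⟩ | ⟨o₁, e, hg, hde⟩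
  · have hc : (v' y : ℝ) ≤ c := Ineq.holds.le (hv' _ hg)
    have hcd : (c : ℝ) < d := by exact_mod_cast hcd
    exact Ineq.holds_of_lt (by linarith [(v' z).coe_nonneg])
  · have hc : (v' y : ℝ) - v' z ≤ c := Ineq.holds.le (hv' _ hg)
    have hcd : (c : ℝ) < d := by exact_mod_cast hcd
    exact Ineq.holds_of_lt (by linarith)
  · have he : (e : ℝ) ≤ v y - v z := Ineq.holds.le (hv _ hg)
    have hde : (d : ℝ) < e := by exact_mod_cast hde
    exact absurd h (Ineq.not_holds_of_lt (by linarith))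

lemma sat_dLower_of_case3G {y z : X} {o : Ineq} {d : ℕ} (h3 : case3G g y z d)
    (hv : satG v g) (hv' : satG v' g) (h : AC.sat v (.dLower d o y z)) :
    AC.sat v' (.dLower d o y z) := by
  rcases h3 with ⟨o₁, c, hg, hcd⟩ | ⟨o₁, c, hg, hcd⟩ | ⟨o₁, e, hg, hde⟩
  · have hc : (v y : ℝ) ≤ c := Ineq.holds.le (hv _ hg)
    have hcd : (c : ℝ) < d := by exact_mod_cast hcd
    exact absurd h (Ineq.not_holds_of_lt (by linarith [(v z).coe_nonneg]))
  · have hc : (v y : ℝ) - v z ≤ c := Ineq.holds.le (hv _ hg)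
    have hcd : (c : ℝ) < d := by exact_mod_cast hcd
    exact absurd h (Ineq.not_holds_of_lt (by linarith))
  · have he : (e : ℝ) ≤ v' y - v' z := Ineq.holds.le (hv' _ hg)
    have hde : (d : ℝ) < e := by exact_mod_cast hde
    exact Ineq.holds_of_lt (by linarith)

lemma sat_delay_upInvA_of_simS {G : Set (AC X)} {up : Update X} {φ : AC X} (hs : simS G v v')
    (hgG : ∀ γ ∈ g, γ ∈ G) (hv : satG v g) (hwp : wp φ g up ∈ G) (ε : NNReal)
    (h : AC.sat (delay v ε) (upInvA up φ)) : AC.sat (delay v' ε) (upInvA up φ) := by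
  have hv' := hs.satG hgG hv
  unfold wp at hwp
  generalize upInvA up φ = ψ at hwp h ⊢
  cases ψ with
  | tt => trivial
  | ff => exact h
  | upper y o d =>
    dsimp only at hwp
    split_ifs at hwp with hU
    · obtain ⟨o₁, c, hg⟩ := hU
      have hle := hs.le_of_upper_mem (hgG _ hg) (hv _ hg)
      exact Ineq.holds.mono (by simp only [coe_delay]; linarith) le_rfl h
    · exact hs ε _ hwp h
  | lower d o y =>
    dsimp only at hwp
    split_ifs at hwp with hU
    · obtain ⟨o₁, hg⟩ := minUpperG_mem hU.1
      have hle := hs.le_of_lower_mem hwp (Ineq.holds.le (hv _ hg))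
      exact Ineq.holds.mono le_rfl (by simp only [coe_delay]; linarith) h
    · exact hs ε _ hwp h
  | dUpper y z o d =>
    dsimp only at hwp
    split_ifs at hwp with h3
    · rw [AC.sat_delay_dUpper] at h ⊢
      exact sat_dUpper_of_case3G h3 hv hv' h
    · exact hs ε _ hwp h
  | dLower d o y z =>
    dsimp only at hwp
    split_ifs at hwp with h3
    · rw [AC.sat_delay_dLower] at h ⊢
      exact sat_dLower_of_case3G h3 hv hv' h
    · exact hs ε _ hwp h

end WeakestPrecondition

section Substitution

variable {X : Type}

/-- The witness `ε` is `δ` for non-diagonal `φ` and `0` for diagonal ones: it cannot always be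
`δ`, since clocks set to a constant by `up` age with `δ`, so that `up(u) + δ ≠ up(u + δ)`. -/
def UpInvExact (up : Update X) (δ : NNReal) (φ : AC X) : Prop :=
  (∀ u u' : Val X, AC.sat (delay (up.app u) δ) φ ↔ AC.sat (delay (up.app u') δ) φ) ∨
  ∃ ε : NNReal, ∀ u, up.nonneg u →
    (AC.sat (delay (up.app u) δ) φ ↔ AC.sat (delay u ε) (upInvA up φ))

lemma upInvExact_upper (up : Update X) (δ : NNReal) (x : X) (o : Ineq) (c : ℕ) :
    UpInvExact up δ (.upper x o c) := by
  rcases hx : up x with a | ⟨y, d⟩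
  · left
    intro u u'
    simp only [AC.sat, coe_delay, up.coe_app_of_const _ hx]
  · right
    refine ⟨δ, fun u hu => ?_⟩
    simp only [upInvA, hx, AC.sat, coe_delay, Update.coe_app_of_clock hu hx]
    split_ifs with hneg
    · have hcd : (c : ℝ) - d < 0 := by exact_mod_cast hneg
      simp only [iff_false]
      exact Ineq.not_holds_of_lt (by linarith [(u y).coe_nonneg, δ.coe_nonneg])
    · simp only [Int.cast_toNat_of_not_neg hneg]
      exact Ineq.holds_congr (by push_cast; ring)

lemma upInvExact_lower (up : Update X) (δ : NNReal) (c : ℕ) (o : Ineq) (x : X) :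
    UpInvExact up δ (.lower c o x) := by
  rcases hx : up x with a | ⟨y, d⟩
  · left
    intro u u'
    simp only [AC.sat, coe_delay, up.coe_app_of_const _ hx]
  · right
    refine ⟨δ, fun u hu => ?_⟩
    simp only [upInvA, hx, AC.sat, coe_delay, Update.coe_app_of_clock hu hx]
    split_ifs with hneg
    · have hcd : (c : ℝ) - d < 0 := by exact_mod_cast hneg
      simp only [iff_true]
      exact Ineq.holds_of_lt (by linarith [(u y).coe_nonneg, δ.coe_nonneg])
    · simp only [Int.cast_toNat_of_not_neg hneg]
      exact Ineq.holds_congr (by push_cast; ring)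

lemma upInvExact_dUpper (up : Update X) (δ : NNReal) (x y : X) (o : Ineq) (c : ℕ) :
    UpInvExact up δ (.dUpper x y o c) := by
  rcases hx : up x with a | ⟨z, e⟩ <;> rcases hy : up y with b | ⟨w, f⟩
  · left
    intro u u'
    simp only [AC.sat, coe_delay, up.coe_app_of_const _ hx, up.coe_app_of_const _ hy]
  all_goals right; refine ⟨0, fun u hu => ?_⟩
  · simp only [upInvA, hx, hy, AC.sat, coe_delay, up.coe_app_of_const _ hx,
      Update.coe_app_of_clock hu hy]
    split_ifs with hneg
    · have : (a : ℝ) - f - c < 0 := by exact_mod_cast hneg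
      simp only [iff_true]
      exact Ineq.holds_of_lt (by linarith [(u w).coe_nonneg])
    · simp only [Int.cast_toNat_of_not_neg hneg]
      exact Ineq.holds_congr (by push_cast; ring)
  · simp only [upInvA, hx, hy, AC.sat, coe_delay, Update.coe_app_of_clock hu hx,
      up.coe_app_of_const _ hy]
    split_ifs with hneg
    · have : (c : ℝ) + b - e < 0 := by exact_mod_cast hneg
      simp only [iff_false]
      exact Ineq.not_holds_of_lt (by linarith [(u z).coe_nonneg])
    · simp only [Int.cast_toNat_of_not_neg hneg]
      exact Ineq.holds_congr (by push_cast; ring)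
  · simp only [upInvA, hx, hy, AC.sat, coe_delay, Update.coe_app_of_clock hu hx,
      Update.coe_app_of_clock hu hy]
    split_ifs with hneg
    · simp only [Int.cast_toNat_of_not_neg (by omega : ¬ -((c : ℤ) - e + f) < 0)]
      exact Ineq.holds_congr (by push_cast; ring)
    · simp only [Int.cast_toNat_of_not_neg hneg]
      exact Ineq.holds_congr (by push_cast; ring)

lemma upInvExact_dLower (up : Update X) (δ : NNReal) (c : ℕ) (o : Ineq) (x y : X) :
    UpInvExact up δ (.dLower c o x y) := by
  rcases hx : up x with a | ⟨z, e⟩ <;> rcases hy : up y with b | ⟨w, f⟩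
  · left
    intro u u'
    simp only [AC.sat, coe_delay, up.coe_app_of_const _ hx, up.coe_app_of_const _ hy]
  all_goals right; refine ⟨0, fun u hu => ?_⟩
  · simp only [upInvA, hx, hy, AC.sat, coe_delay, up.coe_app_of_const _ hx,
      Update.coe_app_of_clock hu hy]
    split_ifs with hneg
    · have : (a : ℝ) - f - c < 0 := by exact_mod_cast hneg
      simp only [iff_false]
      exact Ineq.not_holds_of_lt (by linarith [(u w).coe_nonneg])
    · simp only [Int.cast_toNat_of_not_neg hneg]
      exact Ineq.holds_congr (by push_cast; ring)
  · simp only [upInvA, hx, hy, AC.sat, coe_delay, Update.coe_app_of_clock hu hx,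
      up.coe_app_of_const _ hy]
    split_ifs with hneg
    · have : (c : ℝ) + b - e < 0 := by exact_mod_cast hneg
      simp only [iff_true]
      exact Ineq.holds_of_lt (by linarith [(u z).coe_nonneg])
    · simp only [Int.cast_toNat_of_not_neg hneg]
      exact Ineq.holds_congr (by push_cast; ring)
  · simp only [upInvA, hx, hy, AC.sat, coe_delay, Update.coe_app_of_clock hu hx,
      Update.coe_app_of_clock hu hy]
    split_ifs with hneg
    · simp only [Int.cast_toNat_of_not_neg (by omega : ¬ -((c : ℤ) - e + f) < 0)]
      exact Ineq.holds_congr (by push_cast; ring)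
    · simp only [Int.cast_toNat_of_not_neg hneg]
      exact Ineq.holds_congr (by push_cast; ring)

lemma upInvExact (up : Update X) (δ : NNReal) : ∀ φ : AC X, UpInvExact up δ φ
  | .tt | .ff => .inl fun _ _ => Iff.rfl
  | .upper x o c => upInvExact_upper up δ x o c
  | .lower c o x => upInvExact_lower up δ c o x
  | .dUpper x y o c => upInvExact_dUpper up δ x y o c
  | .dLower c o x y => upInvExact_dLower up δ c o x y

lemma Update.nonneg_iff_sat_upInvA (up : Update X) (u : Val X) :
    up.nonneg u ↔ ∀ x, AC.sat u (upInvA up (.lower 0 .le x)) := by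
  refine forall_congr' fun x => ?_
  rcases hx : up x with a | ⟨y, d⟩
  · simp [upInvA, hx, Rhs.eval, Ineq.holds, AC.sat]
  · simp only [upInvA, hx, Rhs.eval, Nat.cast_zero]
    split_ifs with hneg
    · have : (0 : ℝ) ≤ d := by exact_mod_cast (by omega : (0 : ℤ) ≤ d)
      simp only [AC.sat, iff_true]
      linarith [(u y).coe_nonneg]
    · simp only [AC.sat, Ineq.holds, Int.cast_toNat_of_not_neg hneg]
      push_cast
      constructor <;> intro <;> linarith

end Substitution

section Transitions

variable {X : Type} {Gq G' : Set (AC X)} {g : Guard X} {up : Update X} {v v' : Val X}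

lemma Update.nonneg_of_simS (hs : simS Gq v v') (hgG : ∀ γ ∈ g, γ ∈ Gq) (hv : satG v g)
    (hwp : ∀ x, wp (.lower 0 .le x) g up ∈ Gq) (hnn : up.nonneg v) : up.nonneg v' := by
  rw [Update.nonneg_iff_sat_upInvA] at hnn ⊢
  intro x
  simpa only [delay_zero] using
    sat_delay_upInvA_of_simS hs hgG hv (hwp x) 0 (by rw [delay_zero]; exact hnn x)

lemma simS_app_of_wp_mem (hs : simS Gq v v') (hgG : ∀ γ ∈ g, γ ∈ Gq) (hv : satG v g)
    (hwp : ∀ φ ∈ G', wp φ g up ∈ Gq) (hnn : up.nonneg v) (hnn' : up.nonneg v') :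
    simS G' (up.app v) (up.app v') := by
  intro δ φ hφ h
  rcases upInvExact up δ φ with hconst | ⟨ε, hε⟩
  · exact (hconst v v').mp h
  · rw [hε v' hnn']
    exact sat_delay_upInvA_of_simS hs hgG hv (hwp φ hφ) ε ((hε v hnn).mp h)

end Transitions

theorem stmt3_general {Q X : Type} (A : UTA Q X)
    (G : Q → Set (AC X)) (hG : IsRedGMap A G) :
    IsSimulation A (fun p p' => p.1 = p'.1 ∧ simS (G p.1) p.2 p'.2) := by
  refine ⟨fun p => ⟨rfl, simS.refl _ _⟩, ?_, fun _ _ h => h.1, ?_, ?_⟩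
  · rintro ⟨q₁, v₁⟩ ⟨q₂, v₂⟩ ⟨q₃, v₃⟩ ⟨rfl, h₁₂⟩ ⟨rfl, h₂₃⟩
    exact ⟨rfl, h₁₂.trans h₂₃⟩
  · rintro q v v' δ ⟨-, hs⟩
    exact ⟨rfl, hs.delay δ⟩
  · rintro q v v' t ⟨q₁, v₁⟩ ⟨-, hs⟩ ⟨ht, rfl, rfl, hv, hnn, rfl⟩
    obtain ⟨hguard, hwp₀, hwp⟩ := hG t ht
    have hnn' := Update.nonneg_of_simS hs hguard hv hwp₀ hnn
    exact ⟨t.update.app v', ⟨ht, rfl, rfl, hs.satG hguard hv, hnn', rfl⟩, rfl,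
      simS_app_of_wp_mem hs hguard hv hwp hnn hnn'⟩

/-- Theorem: reduced G-maps give simulations. If `G` is a reduced
G-map for the UTA `A`, then the relation `(q,v) ⊑_G (q',v') ⟺ q = q' ∧ v ⊑_{G(q)} v'`
is a simulation on the UTA semantics. -/
theorem stmt3 {Q X : Type} [Fintype Q] [Fintype X] (A : UTA Q X)
    (G : Q → Set (AC X)) (hG : IsRedGMap A G) :
    IsSimulation A (fun p p' => p.1 = p'.1 ∧ simS (G p.1) p.2 p'.2) :=
  stmt3_general A G hG
end

section
/- For every timed automaton with syntactically bounded subtraction, the smallest reduced G-map is finite, i.e., assigns a finite set of atomic constraints to every state. -/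
open Classical

/-! Under a subtraction update, `up⁻¹(φ)` has constant at most that of `φ` plus the amount `e`
subtracted from its positive clock `x`, or at most an update constant when the substitution moves
the constraint onto another clock; `wp` never increases it further. If `e > 0`, the syntactic
bound puts some `x ◁ c'` in the guard, and Cases 1–3 of `wp` then cap the constant at `c'`. Hence
the constraints whose constant is at most the largest guard constant plus the largest update
constant form a finite reduced G-map, which contains the smallest one. -/

instance : Finite Ineq :=
  Finite.of_surjective (fun b : Bool => if b then Ineq.lt else Ineq.le) (by rintro (_ | _) <;> simp)

section Constraints

variable {X : Type}

theorem AC.finite_setOf_cst_le [Finite X] (N : ℕ) : {φ : AC X | φ.cst ≤ N}.Finite := by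
  have hsub : {φ : AC X | φ.cst ≤ N} ⊆ {.tt, .ff} ∪
      Set.range (fun p : X × Ineq × Fin (N + 1) => AC.upper p.1 p.2.1 p.2.2) ∪
      Set.range (fun p : X × Ineq × Fin (N + 1) => AC.lower p.2.2 p.2.1 p.1) ∪
      Set.range (fun p : X × X × Ineq × Fin (N + 1) => AC.dUpper p.1 p.2.1 p.2.2.1 p.2.2.2) ∪
      Set.range (fun p : X × X × Ineq × Fin (N + 1) => AC.dLower p.2.2.2 p.2.2.1 p.1 p.2.1) := by
    rintro (_ | _ | ⟨x, o, c⟩ | ⟨c, o, x⟩ | ⟨x, y, o, c⟩ | ⟨c, o, x, y⟩) (hc : _ ≤ N) <;> simp <;>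
      exact ⟨⟨c, Nat.lt_succ_of_le hc⟩, rfl⟩
  exact (Set.toFinite _).subset hsub

def AC.posClock : AC X → Option X
  | .upper x _ _ => some x
  | .lower _ _ x => some x
  | .dUpper x _ _ _ => some x
  | .dLower _ _ x _ => some x
  | _ => none

theorem cst_wp_le_cst_upInvA (φ : AC X) (g : Guard X) (up : Update X) :
    (wp φ g up).cst ≤ (upInvA up φ).cst := by
  unfold wp
  split <;> (try split_ifs) <;> simp_all [AC.cst]
  all_goals omega

theorem cst_wp_le_of_upper_mem {φ : AC X} {g : Guard X} {up : Update X} {x : X} {o : Ineq}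
    {c : ℕ} (hmem : AC.upper x o c ∈ g) (hx : (upInvA up φ).posClock = some x) :
    (wp φ g up).cst ≤ c := by
  have hupper : hasUpperG g x := ⟨o, c, hmem⟩
  have hmin : minUpperG g x ≤ c := Nat.sInf_le ⟨o, hmem⟩
  have hcase3 {y d} (h : ¬case3G g x y d) : d ≤ c := by
    by_contra! hd
    exact h (Or.inl ⟨o, c, hmem, hd⟩)
  unfold wp
  generalize upInvA up φ = ψ at hx ⊢
  cases ψ <;> simp only [AC.posClock, Option.some.injEq, reduceCtorEq] at hx <;> subst hx <;>
    dsimp only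
  · simp [hupper, AC.cst]
  · split_ifs with h
    · exact hmin
    · exact (not_lt.mp fun hd => h ⟨hupper, hd⟩).trans hmin
  all_goals
    split_ifs with h
    · exact Nat.zero_le c
    · exact hcase3 h

def IsSubtractionUpdate (up : Update X) : Prop :=
  ∀ x, up x = .const 0 ∨ ∃ e : ℕ, up x = .clock x (-(e : ℤ))

theorem cst_upInvA_le_or_posClock {up : Update X} (hup : IsSubtractionUpdate up) {M : ℕ}
    (hM : ∀ x, (up x).cst ≤ M) (φ : AC X) :
    (upInvA up φ).cst ≤ max φ.cst M ∨
      ∃ (x : X) (e : ℕ), 0 < e ∧ up x = .clock x (-(e : ℤ)) ∧ (upInvA up φ).posClock = some x := by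
  cases φ with
  | tt | ff => simp [upInvA, AC.cst]
  | upper x o c | lower c o x =>
    rcases hup x with hx | ⟨e, hx⟩
    · left; simp only [upInvA, hx]; split_ifs <;> simp [AC.cst]
    · rcases Nat.eq_zero_or_pos e with rfl | he
      · left; simp only [upInvA, hx]; split_ifs <;> simp [AC.cst]
      · right; refine ⟨x, e, he, hx, ?_⟩
        simp only [upInvA, hx]; split_ifs <;> simp [AC.posClock]; omega
  | dUpper x y o c | dLower c o x y =>
    have hMy := hM y
    rcases hup x with hx | ⟨e, hx⟩ <;> rcases hup y with hy | ⟨f, hy⟩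
    · left; simp only [upInvA, hx, hy]; split_ifs <;> simp [AC.cst]
    · simp only [hy, Rhs.cst] at hMy
      left; simp only [upInvA, hx, hy]; split_ifs <;> simp [AC.cst]; omega
    · rcases Nat.eq_zero_or_pos e with rfl | he
      · left; simp only [upInvA, hx, hy]; split_ifs <;> simp [AC.cst]
      · right; refine ⟨x, e, he, hx, ?_⟩
        simp only [upInvA, hx, hy]; split_ifs <;> simp [AC.posClock]; omega
    · simp only [hy, Rhs.cst] at hMy
      rcases Nat.eq_zero_or_pos e with rfl | he
      · left; simp only [upInvA, hx, hy]; split_ifs <;> simp [AC.cst]; omega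
      · simp only [upInvA, hx, hy]
        split_ifs
        · left; simp [AC.cst]; omega
        · right; exact ⟨x, e, he, hx, rfl⟩

end Constraints

section Automaton

variable {Q X : Type} {A : UTA Q X} {t : UTrans Q X}

theorem cst_le_maxGuardConst (ht : t ∈ A.trans) {φ : AC X} (hφ : φ ∈ t.guard) :
    φ.cst ≤ maxGuardConst A :=
  List.le_max_of_le' 0 (List.mem_map_of_mem ht)
    (List.le_max_of_le' 0 (List.mem_map_of_mem hφ) le_rfl)

theorem cst_update_le_maxUpdateConst [Fintype X] (ht : t ∈ A.trans) (x : X) :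
    (t.update x).cst ≤ maxUpdateConst A :=
  List.le_max_of_le' 0 (List.mem_map_of_mem ht)
    (Finset.le_sup (f := fun x => (t.update x).cst) (Finset.mem_univ x))

theorem IsSynBoundedSub.cst_wp_le [Fintype X] (h : IsSynBoundedSub A) (ht : t ∈ A.trans)
    {φ : AC X} (hφ : φ.cst ≤ maxGuardConst A + maxUpdateConst A) :
    (wp φ t.guard t.update).cst ≤ maxGuardConst A + maxUpdateConst A := by
  rcases cst_upInvA_le_or_posClock (h.1 t ht) (cst_update_le_maxUpdateConst ht) φ with
    hle | ⟨x, e, he, hx, hpos⟩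
  · calc (wp φ t.guard t.update).cst ≤ (upInvA t.update φ).cst := cst_wp_le_cst_upInvA ..
      _ ≤ max φ.cst (maxUpdateConst A) := hle
      _ ≤ _ := max_le hφ (Nat.le_add_left _ _)
  · obtain ⟨o, c, hmem⟩ := h.2 t ht x e he hx
    calc (wp φ t.guard t.update).cst ≤ c := cst_wp_le_of_upper_mem hmem hpos
      _ ≤ maxGuardConst A := cst_le_maxGuardConst ht hmem
      _ ≤ _ := Nat.le_add_right _ _

theorem IsSynBoundedSub.isRedGMap_cst_le [Fintype X] (h : IsSynBoundedSub A) :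
    IsRedGMap A fun _ => {φ | φ.cst ≤ maxGuardConst A + maxUpdateConst A} := fun _ ht =>
  ⟨fun _ hφ => (cst_le_maxGuardConst ht hφ).trans (Nat.le_add_right _ _),
    fun _ => h.cst_wp_le ht (Nat.zero_le _), fun _ hφ => h.cst_wp_le ht hφ⟩

theorem minRedGMap_subset {G : Q → Set (AC X)} (hG : IsRedGMap A G) (q : Q) :
    minRedGMap A q ⊆ G q :=
  Set.biInter_subset_of_mem hG

end Automaton

theorem stmt10_general {Q X : Type} [Fintype X] (A : UTA Q X)
    (h : IsSynBoundedSub A) :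
    ∀ q, (minRedGMap A q).Finite :=
  fun q => (AC.finite_setOf_cst_le _).subset (minRedGMap_subset h.isRedGMap_cst_le q)

/-- Theorem `reduced-g-bounds-finite-syntactically-bdd`. The
smallest reduced G-map of a timed automaton with syntactically bounded subtraction
assigns a finite set to every state. -/
theorem stmt10 {Q X : Type} [Fintype Q] [Fintype X] (A : UTA Q X)
    (h : IsSynBoundedSub A) :
    ∀ q, (minRedGMap A q).Finite :=
  stmt10_general A h
end
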